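/- The indistinguishability relation ∼ preserves the half-duplex property: if w ∼ w' (w' obtained from w by finitely many allowed adjacent swaps) and w is channel-compliant and half-duplex, then w' is half-duplex. -/
import Mathlib


/-- Events: `snd P Q m` is process `P` sending message `m` to `Q`;
    `rcv P Q m` is process `Q` receiving message `m` from `P`. -/
inductive Ev where
  | snd : ℕ → ℕ → ℕ → Ev
  | rcv : ℕ → ℕ → ℕ → Ev
deriving DecidableEq

/-- Message values of send events on channel (P,Q) in w. -/
def sends (w : List Ev) (P Q : ℕ) : List ℕ :=
  w.filterMap fun e => match e with
    | .snd p q m => if p = P ∧ q = Q then some m else none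
    | _ => none

/-- Message values of receive events on channel (P,Q) in w. -/
def recvs (w : List Ev) (P Q : ℕ) : List ℕ :=
  w.filterMap fun e => match e with
    | .rcv p q m => if p = P ∧ q = Q then some m else none
    | _ => none

def channelCompliant (w : List Ev) : Prop :=
  ∀ u, u <+: w → ∀ P Q, recvs u P Q <+: sends u P Q

def complete (w : List Ev) : Prop :=
  ∀ P Q, sends w P Q = recvs w P Q

def bounded (B : ℕ) (w : List Ev) : Prop :=
  ∀ u, u <+: w → ∀ P Q, (sends u P Q).length ≤ (recvs u P Q).length + B

def halfDuplex (w : List Ev) : Prop :=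
  ∀ u, u <+: w → ∀ P Q,
    sends u P Q = recvs u P Q ∨ sends u Q P = recvs u Q P

/-- Send at position i on channel (P,Q) is matched by receive at position j. -/
def Matches (w : List Ev) (P Q i j : ℕ) : Prop :=
  i < j ∧ j < w.length ∧
  (∃ m, w[i]? = some (.snd P Q m) ∧ w[j]? = some (.rcv P Q m)) ∧
  sends (w.take (i+1)) P Q = recvs (w.take (j+1)) P Q

def IsSendAt (w : List Ev) (P Q i : ℕ) : Prop := ∃ m, w[i]? = some (Ev.snd P Q m)
def IsRcvAt (w : List Ev) (P Q i : ℕ) : Prop := ∃ m, w[i]? = some (Ev.rcv P Q m)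
def MatchedAt (w : List Ev) (P Q i : ℕ) : Prop := ∃ j, Matches w P Q i j

/-- The process performing the event. -/
def actor : Ev → ℕ
  | .snd p _ _ => p
  | .rcv _ q _ => q

/-- Projection of a word onto the events of process X. -/
def proj (w : List Ev) (X : ℕ) : List Ev := w.filter (fun e => actor e == X)

/-- Two words induce the same MSC (same per-process orders; with FIFO matching,
    this determines the matching). -/
def sameMSC (w v : List Ev) : Prop := ∀ X, proj w X = proj v X

/-- Existentially B-bounded: some linearisation of msc(w) is B-bounded. -/
def existBounded (B : ℕ) (w : List Ev) : Prop :=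
  ∃ v, channelCompliant v ∧ sameMSC w v ∧ bounded B v

def isSnd : Ev → Prop
  | .snd _ _ _ => True
  | _ => False

def isRcv : Ev → Prop
  | .rcv _ _ _ => True
  | _ => False

/-- Positions i and j lie in the same block of the block decomposition. -/
def SameBlock (blocks : List (List Ev)) (i j : ℕ) : Prop :=
  ∃ t, ((blocks.take t).flatten).length ≤ i ∧ j < ((blocks.take (t+1)).flatten).length

/-- w is k-synchronisable: some linearisation of msc(w) splits into blocks of
    at most k sends followed by at most k receives, with matched pairs co-located. -/
def kSynchronisable (k : ℕ) (w : List Ev) : Prop :=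
  ∃ blocks : List (List Ev),
    channelCompliant blocks.flatten ∧ sameMSC w blocks.flatten ∧
    (∀ b ∈ blocks, ∃ s r, b = s ++ r ∧ s.length ≤ k ∧ r.length ≤ k ∧
      (∀ e ∈ s, isSnd e) ∧ (∀ e ∈ r, isRcv e)) ∧
    (∀ P Q i j, Matches blocks.flatten P Q i j → SameBlock blocks i j)

/-- One step of the indistinguishability relation ∼. -/
inductive Sim1 : List Ev → List Ev → Prop
  | ss (u v : List Ev) (P Q R S m m' : ℕ) (h : P ≠ R) :
      Sim1 (u ++ Ev.snd P Q m :: Ev.snd R S m' :: v)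
           (u ++ Ev.snd R S m' :: Ev.snd P Q m :: v)
  | rr (u v : List Ev) (P Q R S m m' : ℕ) (h : Q ≠ S) :
      Sim1 (u ++ Ev.rcv P Q m :: Ev.rcv R S m' :: v)
           (u ++ Ev.rcv R S m' :: Ev.rcv P Q m :: v)
  | sr (u v : List Ev) (P Q R S m m' : ℕ) (h1 : P ≠ S) (h2 : P ≠ R ∨ Q ≠ S) :
      Sim1 (u ++ Ev.snd P Q m :: Ev.rcv R S m' :: v)
           (u ++ Ev.rcv R S m' :: Ev.snd P Q m :: v)
  | srSame (u v : List Ev) (P Q m m' : ℕ)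
      (h : (recvs u P Q).length < (sends u P Q).length) :
      Sim1 (u ++ Ev.snd P Q m :: Ev.rcv P Q m' :: v)
           (u ++ Ev.rcv P Q m' :: Ev.snd P Q m :: v)

/-- The indistinguishability relation ∼ (finitely many swaps). -/
def Sim : List Ev → List Ev → Prop := Relation.ReflTransGen Sim1

lemma sends_append (x y : List Ev) (P Q : ℕ) :
    sends (x ++ y) P Q = sends x P Q ++ sends y P Q := List.filterMap_append ..
lemma recvs_append (x y : List Ev) (P Q : ℕ) :
    recvs (x ++ y) P Q = recvs x P Q ++ recvs y P Q := List.filterMap_append ..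

lemma sends_cons_snd (p q m P Q : ℕ) (w : List Ev) :
    sends (Ev.snd p q m :: w) P Q
      = (if p = P ∧ q = Q then [m] else []) ++ sends w P Q := by
  simp only [sends, List.filterMap_cons]
  split_ifs <;> simp_all

lemma sends_cons_rcv (p q m P Q : ℕ) (w : List Ev) :
    sends (Ev.rcv p q m :: w) P Q = sends w P Q := by
  simp [sends, List.filterMap_cons]

lemma recvs_cons_rcv (p q m P Q : ℕ) (w : List Ev) :
    recvs (Ev.rcv p q m :: w) P Q
      = (if p = P ∧ q = Q then [m] else []) ++ recvs w P Q := by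
  simp only [recvs, List.filterMap_cons]
  split_ifs <;> simp_all

lemma recvs_cons_snd (p q m P Q : ℕ) (w : List Ev) :
    recvs (Ev.snd p q m :: w) P Q = recvs w P Q := by
  simp [recvs, List.filterMap_cons]

@[simp] lemma sends_nil' (P Q : ℕ) : sends [] P Q = [] := rfl
@[simp] lemma recvs_nil' (P Q : ℕ) : recvs [] P Q = [] := rfl

def ccAt (x : List Ev) : Prop := ∀ P Q, recvs x P Q <+: sends x P Q
def hhAt (x : List Ev) : Prop :=
  ∀ P Q, sends x P Q = recvs x P Q ∨ sends x Q P = recvs x Q P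

lemma no_ext {l1 l2 : List ℕ} {m : ℕ} (hp : l2 <+: l1) (he : l1 ++ [m] = l2) :
    False := by
  have h1 := hp.length_le
  have h2 := congrArg List.length he
  simp at h2; omega

lemma dropSnd (x : List Ev) (P Q m : ℕ) (hcc : ccAt x)
    (hh : hhAt (x ++ [Ev.snd P Q m])) : hhAt x := by
  intro X Y
  rcases hh X Y with h | h
  · rw [sends_append, recvs_append, sends_cons_snd, recvs_cons_snd] at h
    by_cases c : P = X ∧ Q = Y
    · simp [c] at h; exact absurd h (fun he => no_ext (hcc X Y) he)
    · simp [c] at h; exact Or.inl h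
  · rw [sends_append, recvs_append, sends_cons_snd, recvs_cons_snd] at h
    by_cases c : P = Y ∧ Q = X
    · simp [c] at h; exact absurd h (fun he => no_ext (hcc Y X) he)
    · simp [c] at h; exact Or.inr h

lemma midRcv (u : List Ev) (R S m' : ℕ) (hh : hhAt u)
    (hkey : recvs u R S ++ [m'] <+: sends u R S) :
    hhAt (u ++ [Ev.rcv R S m']) := by
  have hlen := hkey.length_le
  simp at hlen
  intro X Y
  rw [sends_append, recvs_append, sends_append, recvs_append,
      sends_cons_rcv, sends_cons_rcv, recvs_cons_rcv, recvs_cons_rcv]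
  rcases hh X Y with h | h
  · by_cases c1 : R = X ∧ S = Y
    · exfalso; obtain ⟨rfl, rfl⟩ := c1
      have := congrArg List.length h; omega
    · left; simp [c1, h]
  · by_cases c2 : R = Y ∧ S = X
    · exfalso; obtain ⟨rfl, rfl⟩ := c2
      have := congrArg List.length h; omega
    · right; simp [c2, h]

lemma ccAppendSnd (u : List Ev) (R S m' : ℕ) (hcc : ccAt u) :
    ccAt (u ++ [Ev.snd R S m']) := by
  intro X Y
  rw [sends_append, recvs_append, recvs_cons_snd]
  simpa using (hcc X Y).trans (List.prefix_append _ _)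

lemma ccAppendRcv (u : List Ev) (R S m' : ℕ) (hcc : ccAt u)
    (hkey : recvs u R S ++ [m'] <+: sends u R S) :
    ccAt (u ++ [Ev.rcv R S m']) := by
  intro X Y
  rw [sends_append, recvs_append, sends_cons_rcv, recvs_cons_rcv]
  by_cases c : R = X ∧ S = Y
  · obtain ⟨rfl, rfl⟩ := c; simpa using hkey
  · simp [c, hcc X Y]

lemma swap_eq (u q : List Ev) (a b : Ev)
    (hs : ∀ X Y, sends [a, b] X Y = sends [b, a] X Y)
    (hr : ∀ X Y, recvs [a, b] X Y = recvs [b, a] X Y) (X Y : ℕ) :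
    sends (u ++ b :: a :: q) X Y = sends (u ++ a :: b :: q) X Y ∧
    recvs (u ++ b :: a :: q) X Y = recvs (u ++ a :: b :: q) X Y := by
  have e1 : u ++ b :: a :: q = u ++ [b, a] ++ q := by simp
  have e2 : u ++ a :: b :: q = u ++ [a, b] ++ q := by simp
  rw [e1, e2, sends_append, sends_append, sends_append, sends_append,
      recvs_append, recvs_append, recvs_append, recvs_append, hs X Y, hr X Y]
  exact ⟨rfl, rfl⟩

lemma prefix_cases {p u v : List Ev} {a b : Ev} (h : p <+: u ++ b :: a :: v) :
    p <+: u ∨ p = u ++ [b] ∨ ∃ q, q <+: v ∧ p = u ++ b :: a :: q := by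
  by_cases h1 : p.length ≤ u.length
  · exact Or.inl (List.prefix_of_prefix_length_le h ⟨b :: a :: v, rfl⟩ h1)
  by_cases h2 : p.length ≤ u.length + 1
  · right; left
    have hp : p <+: u ++ [b] :=
      List.prefix_of_prefix_length_le h ⟨a :: v, by simp⟩ (by simp; omega)
    exact hp.sublist.eq_of_length (by simp; omega)
  · right; right
    have hp : u ++ [b, a] <+: p :=
      List.prefix_of_prefix_length_le ⟨v, by simp⟩ h (by simp; omega)
    obtain ⟨q, rfl⟩ := hp
    refine ⟨q, ?_, by simp⟩
    obtain ⟨t, ht⟩ := h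
    exact ⟨t, by simpa using ht⟩

lemma assemble (u v : List Ev) (a b : Ev)
    (hc : channelCompliant (u ++ a :: b :: v))
    (hh : halfDuplex (u ++ a :: b :: v))
    (hs : ∀ X Y, sends [a, b] X Y = sends [b, a] X Y)
    (hr : ∀ X Y, recvs [a, b] X Y = recvs [b, a] X Y)
    (hmidc : ccAt (u ++ [b])) (hmidh : hhAt (u ++ [b])) :
    channelCompliant (u ++ b :: a :: v) ∧ halfDuplex (u ++ b :: a :: v) := by
  constructor
  · intro p hp P Q
    rcases prefix_cases hp with h | rfl | ⟨q, hq, rfl⟩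
    · exact hc p (h.trans ⟨a :: b :: v, rfl⟩) P Q
    · exact hmidc P Q
    · obtain ⟨e1, e2⟩ := swap_eq u q a b hs hr P Q
      rw [e1, e2]
      refine hc _ ?_ P Q
      obtain ⟨t, rfl⟩ := hq
      exact ⟨t, by simp⟩
  · intro p hp P Q
    rcases prefix_cases hp with h | rfl | ⟨q, hq, rfl⟩
    · exact hh p (h.trans ⟨a :: b :: v, rfl⟩) P Q
    · exact hmidh P Q
    · obtain ⟨e1, e2⟩ := swap_eq u q a b hs hr P Q
      obtain ⟨e3, e4⟩ := swap_eq u q a b hs hr Q P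
      rw [e1, e2, e3, e4]
      refine hh _ ?_ P Q
      obtain ⟨t, rfl⟩ := hq
      exact ⟨t, by simp⟩

lemma hhAt_swap (u : List Ev) (a b : Ev)
    (hs : ∀ X Y, sends [a, b] X Y = sends [b, a] X Y)
    (hr : ∀ X Y, recvs [a, b] X Y = recvs [b, a] X Y)
    (h : hhAt (u ++ [a, b])) : hhAt (u ++ [b, a]) := by
  intro X Y
  have e1 : u ++ [b, a] = u ++ b :: a :: ([] : List Ev) := by simp
  have e2 : u ++ [a, b] = u ++ a :: b :: ([] : List Ev) := by simp
  rw [e1]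
  obtain ⟨f1, f2⟩ := swap_eq u [] a b hs hr X Y
  obtain ⟨f3, f4⟩ := swap_eq u [] a b hs hr Y X
  rw [f1, f2, f3, f4, ← e2]
  exact h X Y

lemma step (x y : List Ev) (h : Sim1 x y) (hc : channelCompliant x)
    (hh : halfDuplex x) : channelCompliant y ∧ halfDuplex y := by
  cases h with
  | ss u v P Q R S m m' hPR =>
      have hcu : ccAt u := hc u ⟨_, rfl⟩
      have hs : ∀ X Y, sends [Ev.snd P Q m, Ev.snd R S m'] X Y
          = sends [Ev.snd R S m', Ev.snd P Q m] X Y := by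
        intro X Y
        by_cases c1 : P = X ∧ Q = Y <;> by_cases c2 : R = X ∧ S = Y <;>
          simp [sends_cons_snd, c1, c2]
        exact absurd (c1.1.trans c2.1.symm) hPR
      have hr : ∀ X Y, recvs [Ev.snd P Q m, Ev.snd R S m'] X Y
          = recvs [Ev.snd R S m', Ev.snd P Q m] X Y := by
        intro X Y; simp [recvs_cons_snd]
      have hAB : hhAt (u ++ [Ev.snd P Q m, Ev.snd R S m']) :=
        hh _ ⟨v, by simp⟩
      have hmidc : ccAt (u ++ [Ev.snd R S m']) := ccAppendSnd u R S m' hcu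
      have hmidh : hhAt (u ++ [Ev.snd R S m']) := by
        have hBA := hhAt_swap u _ _ hs hr hAB
        have : u ++ [Ev.snd R S m', Ev.snd P Q m]
            = (u ++ [Ev.snd R S m']) ++ [Ev.snd P Q m] := by simp
        rw [this] at hBA
        exact dropSnd _ P Q m hmidc hBA
      exact assemble u v _ _ hc hh hs hr hmidc hmidh
  | rr u v P Q R S m m' hQS =>
      have hcu : ccAt u := hc u ⟨_, rfl⟩
      have hhu : hhAt u := hh u ⟨_, rfl⟩
      have hs : ∀ X Y, sends [Ev.rcv P Q m, Ev.rcv R S m'] X Y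
          = sends [Ev.rcv R S m', Ev.rcv P Q m] X Y := by
        intro X Y; simp [sends_cons_rcv]
      have hr : ∀ X Y, recvs [Ev.rcv P Q m, Ev.rcv R S m'] X Y
          = recvs [Ev.rcv R S m', Ev.rcv P Q m] X Y := by
        intro X Y
        by_cases c1 : P = X ∧ Q = Y <;> by_cases c2 : R = X ∧ S = Y <;>
          simp [recvs_cons_rcv, c1, c2]
        exact absurd (c1.2.trans c2.2.symm) hQS
      have hkey : recvs u R S ++ [m'] <+: sends u R S := by
        have := hc (u ++ [Ev.rcv P Q m, Ev.rcv R S m']) ⟨v, by simp⟩ R S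
        rw [recvs_append, sends_append, recvs_cons_rcv, recvs_cons_rcv,
            sends_cons_rcv, sends_cons_rcv] at this
        have hne : ¬(P = R ∧ Q = S) := fun hc => hQS hc.2
        simpa [hne] using this
      have hmidc : ccAt (u ++ [Ev.rcv R S m']) := ccAppendRcv u R S m' hcu hkey
      have hmidh : hhAt (u ++ [Ev.rcv R S m']) := midRcv u R S m' hhu hkey
      exact assemble u v _ _ hc hh hs hr hmidc hmidh
  | sr u v P Q R S m m' h1 h2 =>
      have hcu : ccAt u := hc u ⟨_, rfl⟩
      have hhu : hhAt u := hh u ⟨_, rfl⟩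
      have hs : ∀ X Y, sends [Ev.snd P Q m, Ev.rcv R S m'] X Y
          = sends [Ev.rcv R S m', Ev.snd P Q m] X Y := by
        intro X Y; simp [sends_cons_rcv, sends_cons_snd]
      have hr : ∀ X Y, recvs [Ev.snd P Q m, Ev.rcv R S m'] X Y
          = recvs [Ev.rcv R S m', Ev.snd P Q m] X Y := by
        intro X Y; simp [recvs_cons_rcv, recvs_cons_snd]
      have hkey : recvs u R S ++ [m'] <+: sends u R S := by
        have := hc (u ++ [Ev.snd P Q m, Ev.rcv R S m']) ⟨v, by simp⟩ R S
        rw [recvs_append, sends_append, recvs_cons_snd, recvs_cons_rcv,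
            sends_cons_snd, sends_cons_rcv] at this
        have hne : ¬(P = R ∧ Q = S) := by
          rcases h2 with h | h <;> exact fun hc => h (by simp [hc.1, hc.2])
        simpa [hne] using this
      have hmidc : ccAt (u ++ [Ev.rcv R S m']) := ccAppendRcv u R S m' hcu hkey
      have hmidh : hhAt (u ++ [Ev.rcv R S m']) := midRcv u R S m' hhu hkey
      exact assemble u v _ _ hc hh hs hr hmidc hmidh
  | srSame u v P Q m m' hlt =>
      have hcu : ccAt u := hc u ⟨_, rfl⟩
      have hhu : hhAt u := hh u ⟨_, rfl⟩
      have hs : ∀ X Y, sends [Ev.snd P Q m, Ev.rcv P Q m'] X Y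
          = sends [Ev.rcv P Q m', Ev.snd P Q m] X Y := by
        intro X Y; simp [sends_cons_rcv, sends_cons_snd]
      have hr : ∀ X Y, recvs [Ev.snd P Q m, Ev.rcv P Q m'] X Y
          = recvs [Ev.rcv P Q m', Ev.snd P Q m] X Y := by
        intro X Y; simp [recvs_cons_rcv, recvs_cons_snd]
      have hkey : recvs u P Q ++ [m'] <+: sends u P Q := by
        have hpre := hc (u ++ [Ev.snd P Q m, Ev.rcv P Q m']) ⟨v, by simp⟩ P Q
        rw [recvs_append, sends_append, recvs_cons_snd, recvs_cons_rcv,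
            sends_cons_snd, sends_cons_rcv] at hpre
        simp only [and_self, if_true, if_pos (And.intro rfl rfl), List.append_nil] at hpre
        refine List.prefix_of_prefix_length_le hpre (List.prefix_append _ _) ?_
        simp; omega
      have hmidc : ccAt (u ++ [Ev.rcv P Q m']) := ccAppendRcv u P Q m' hcu hkey
      have hmidh : hhAt (u ++ [Ev.rcv P Q m']) := midRcv u P Q m' hhu hkey
      exact assemble u v _ _ hc hh hs hr hmidc hmidh


/-- the indistinguishability relation ∼ preserves the
    half-duplex property. -/
theorem sim_preserves_halfDuplex (w w' : List Ev)
    (hc : channelCompliant w) (hh : halfDuplex w) (hs : Sim w w') :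
    halfDuplex w' := by
  suffices h : channelCompliant w' ∧ halfDuplex w' from h.2
  induction hs with
  | refl => exact ⟨hc, hh⟩
  | tail _ h1 ih => exact step _ _ h1 ih.1 ih.2
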